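/- Let x = (x₁,x₂,x₃) ∈ ℝ³ with θ := ‖x‖ > 0, and for α ∈ {1,2,3} let D_α(x) denote the Fréchet derivative at x of the map y ↦ exp(ŷ), applied to the standard basis vector e_α. Then for all α, β ∈ {1,2,3}: (1/2)⟨D_α(x), D_β(x)⟩_F = ((2 cos θ − 2 + θ²)/θ⁴) x_α x_β + (2(1 − cos θ)/θ²) δ_{αβ}. -/

import Mathlib

open Matrix Real

noncomputable section

/-- `ℝ³` with the Euclidean norm. -/
abbrev E3 := EuclideanSpace ℝ (Fin 3)

/-- Hat map: the skew-symmetric matrix associated to a vector `x ∈ ℝ³`,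
with rows `(0, −x₃, x₂)`, `(x₃, 0, −x₁)`, `(−x₂, x₁, 0)`. -/
def hat (x : E3) : Matrix (Fin 3) (Fin 3) ℝ :=
  !![0, -x 2, x 1; x 2, 0, -x 0; -x 1, x 0, 0]

/-- Standard basis vectors `e_α` of `ℝ³`. -/
def e (α : Fin 3) : E3 := EuclideanSpace.single α 1

attribute [local instance] Matrix.normedAddCommGroup Matrix.normedSpace

/-- Frobenius inner product `⟨A,B⟩_F = tr(AᵀB)`. -/
def frob (A B : Matrix (Fin 3) (Fin 3) ℝ) : ℝ := (Aᵀ * B).trace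

/-!
Since `(hat x)³ = -‖x‖² • hat x`, the exponential series of `hat x` collapses to Rodrigues'
formula `exp (hat x) = 1 + (sin θ / θ) • hat x + ((1 - cos θ) / θ²) • (hat x)²`, `θ = ‖x‖`.
Differentiating it in a direction `v` gives a combination of the skew-symmetric matrices `hat x`,
`hat v` and the symmetric matrices `(hat x)²`, `hat x * hat v + hat v * hat x`. Skew-symmetric and
symmetric matrices are Frobenius-orthogonal, and the remaining Frobenius products are polynomials in
`‖x‖²`, `⟪x, v⟫`, `⟪x, w⟫`, `⟪v, w⟫`; with `sin² θ + cos² θ = 1` the metric takes the stated form.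
-/

open scoped Nat RealInnerProductSpace

section ExpOfCubicRelation

variable {𝔸 : Type*} [Ring 𝔸] [Algebra ℝ 𝔸]

lemma pow_two_mul_add_one_of_pow_three {A : 𝔸} {c : ℝ} (h : A ^ 3 = c • A) (k : ℕ) :
    A ^ (2 * k + 1) = c ^ k • A := by
  induction k with
  | zero => simp
  | succ k ih =>
    rw [show 2 * (k + 1) + 1 = 2 + (2 * k + 1) by ring, pow_add, ih, mul_smul_comm,
      ← pow_succ, h, smul_smul, pow_succ]

lemma pow_two_mul_add_two_of_pow_three {A : 𝔸} {c : ℝ} (h : A ^ 3 = c • A) (k : ℕ) :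
    A ^ (2 * k + 2) = c ^ k • A ^ 2 := by
  rw [pow_succ, pow_two_mul_add_one_of_pow_three h, smul_mul_assoc, ← sq]

end ExpOfCubicRelation

lemma Real.hasSum_sin_div (θ : ℝ) (hθ : θ ≠ 0) :
    HasSum (fun k : ℕ => (-θ ^ 2) ^ k * ((2 * k + 1)! : ℝ)⁻¹) (sin θ / θ) := by
  refine ((Real.hasSum_sin θ).div_const θ).congr_fun fun k => ?_
  field_simp
  ring

lemma Real.hasSum_one_sub_cos_div_sq (θ : ℝ) (hθ : θ ≠ 0) :
    HasSum (fun k : ℕ => (-θ ^ 2) ^ k * ((2 * k + 2)! : ℝ)⁻¹) ((1 - cos θ) / θ ^ 2) := by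
  have h := ((hasSum_nat_add_iff' 1).mpr (Real.hasSum_cos θ)).div_const (-θ ^ 2)
  rw [show (cos θ - ∑ i ∈ Finset.range 1, (-1) ^ i * θ ^ (2 * i) / (2 * i)!) / -θ ^ 2
      = (1 - cos θ) / θ ^ 2 by simp; field_simp; ring] at h
  refine h.congr_fun fun k => ?_
  rw [show 2 * (k + 1) = 2 * k + 2 by ring]
  field_simp
  ring

lemma exp_eq_of_pow_three_eq_neg_sq_smul {𝔸 : Type*} [Ring 𝔸] [Algebra ℝ 𝔸] [TopologicalSpace 𝔸]
    [IsTopologicalRing 𝔸] [ContinuousSMul ℝ 𝔸] [T2Space 𝔸] {A : 𝔸} {θ : ℝ} (hθ : θ ≠ 0)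
    (h : A ^ 3 = (-θ ^ 2) • A) :
    NormedSpace.exp A = 1 + (sin θ / θ) • A + ((1 - cos θ) / θ ^ 2) • A ^ 2 := by
  set f : ℕ → 𝔸 := fun n => ((n ! : ℝ)⁻¹) • A ^ n
  have hodd : HasSum (fun k => f (2 * k + 1)) ((sin θ / θ) • A) :=
    ((Real.hasSum_sin_div θ hθ).smul_const A).congr_fun fun k => by
      simp only [f]
      rw [pow_two_mul_add_one_of_pow_three h, smul_smul, mul_comm]
  have heven : HasSum (fun k => f (2 * k)) (1 + ((1 - cos θ) / θ ^ 2) • A ^ 2) := by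
    have hshift : HasSum (fun k => f (2 * (k + 1))) (((1 - cos θ) / θ ^ 2) • A ^ 2) :=
      ((Real.hasSum_one_sub_cos_div_sq θ hθ).smul_const (A ^ 2)).congr_fun fun k => by
        simp only [f]
        rw [mul_add, mul_one, pow_two_mul_add_two_of_pow_three h, smul_smul, mul_comm]
    simpa [f, add_comm] using (hasSum_nat_add_iff (f := fun k => f (2 * k)) 1).mp hshift
  rw [NormedSpace.exp_eq_tsum ℝ]
  exact (heven.even_add_odd hodd).tsum_eq.trans (by abel)

abbrev M3 := Matrix (Fin 3) (Fin 3) ℝ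

lemma E3.inner_eq (v w : E3) : ⟪v, w⟫ = v 0 * w 0 + v 1 * w 1 + v 2 * w 2 := by
  simp [PiLp.inner_apply, Fin.sum_univ_three, mul_comm]

lemma E3.norm_sq_eq (x : E3) : ‖x‖ ^ 2 = x 0 ^ 2 + x 1 ^ 2 + x 2 ^ 2 := by
  rw [← real_inner_self_eq_norm_sq, E3.inner_eq]
  ring

lemma hat_pow_three (x : E3) : hat x ^ 3 = (-‖x‖ ^ 2) • hat x := by
  rw [E3.norm_sq_eq]
  ext i j
  fin_cases i <;> fin_cases j <;> simp [hat, pow_succ, Matrix.mul_apply, Fin.sum_univ_three] <;>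
    ring

theorem exp_hat {x : E3} (hx : x ≠ 0) :
    NormedSpace.exp (hat x) =
      1 + (sin ‖x‖ / ‖x‖) • hat x + ((1 - cos ‖x‖) / ‖x‖ ^ 2) • hat x ^ 2 :=
  exp_eq_of_pow_three_eq_neg_sq_smul (norm_ne_zero_iff.2 hx) (hat_pow_three x)

def hatAnticomm (x v : E3) : M3 := hat x * hat v + hat v * hat x

def hatLinearMap : E3 →ₗ[ℝ] M3 where
  toFun := hat
  map_add' v w := by
    ext i j
    fin_cases i <;> fin_cases j <;> simp [hat] <;> ring
  map_smul' c v := by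
    ext i j
    fin_cases i <;> fin_cases j <;> simp [hat]

-- Phrased with `IsBoundedLinearMap` so that the derivative it yields carries the normed-space
-- structure of `M3` used by `fderiv`, on which `simp` lemmas for applied maps then fire.
lemma isBoundedLinearMap_hat : IsBoundedLinearMap ℝ hat :=
  (LinearMap.toContinuousLinearMap hatLinearMap).isBoundedLinearMap

lemma isBoundedBilinearMap_matrix_mul : IsBoundedBilinearMap ℝ fun p : M3 × M3 => p.1 * p.2 :=
  (LinearMap.mul ℝ M3).toContinuousBilinearMap.isBoundedBilinearMap

lemma hasFDerivAt_norm_of_ne_zero {F : Type*} [NormedAddCommGroup F] [InnerProductSpace ℝ F]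
    {x : F} (hx : x ≠ 0) : HasFDerivAt (‖·‖) (‖x‖⁻¹ • innerSL ℝ x) x := by
  have h := (Real.hasDerivAt_sqrt (pow_ne_zero 2 (norm_ne_zero_iff.2 hx))).comp_hasFDerivAt x
    (hasStrictFDerivAt_norm_sq x).hasFDerivAt
  have hsqrt : (fun t => √t) ∘ (fun y : F => ‖y‖ ^ 2) = (‖·‖) :=
    funext fun y => Real.sqrt_sq (norm_nonneg y)
  rw [hsqrt, Real.sqrt_sq (norm_nonneg x)] at h
  refine h.congr_fderiv ?_
  ext y
  simp
  ring

lemma fderiv_exp_hat_apply {x : E3} (hx : x ≠ 0) (v : E3) :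
    fderiv ℝ (fun y : E3 => NormedSpace.exp (hat y)) x v =
      ((‖x‖ * cos ‖x‖ - sin ‖x‖) / ‖x‖ ^ 3 * ⟪x, v⟫) • hat x + (sin ‖x‖ / ‖x‖) • hat v
        + ((‖x‖ * sin ‖x‖ - 2 * (1 - cos ‖x‖)) / ‖x‖ ^ 4 * ⟪x, v⟫) • (hat x * hat x)
        + ((1 - cos ‖x‖) / ‖x‖ ^ 2) • hatAnticomm x v := by
  have hθ : ‖x‖ ≠ 0 := norm_ne_zero_iff.2 hx
  have hnorm := hasFDerivAt_norm_of_ne_zero hx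
  have hsinc : HasFDerivAt (fun y : E3 => sin ‖y‖ / ‖y‖) _ x :=
    ((hasDerivAt_sin _).div (hasDerivAt_id _) hθ).comp_hasFDerivAt x hnorm
  have hcosc : HasFDerivAt (fun y : E3 => (1 - cos ‖y‖) / ‖y‖ ^ 2) _ x :=
    (((hasDerivAt_const _ 1).sub (hasDerivAt_cos _)).div (hasDerivAt_pow 2 _)
      (pow_ne_zero 2 hθ)).comp_hasFDerivAt x hnorm
  have hhat := isBoundedLinearMap_hat.hasFDerivAt (x := x)
  have hsq := (isBoundedBilinearMap_matrix_mul.hasFDerivAt (hat x, hat x)).comp x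
    (hhat.prodMk hhat)
  have hrod : (fun y : E3 => NormedSpace.exp (hat y)) =ᶠ[nhds x] fun y =>
      1 + (sin ‖y‖ / ‖y‖) • hat y + ((1 - cos ‖y‖) / ‖y‖ ^ 2) • (hat y * hat y) := by
    filter_upwards [eventually_ne_nhds hx] with y hy
    rw [exp_hat hy, sq (hat y)]
  have hD := (((hsinc.smul hhat).const_add 1).add (hcosc.smul hsq)).congr_of_eventuallyEq hrod
  refine (congrArg (fun L => L v) hD.fderiv).trans ?_
  have hhat_apply : IsBoundedLinearMap.toContinuousLinearMap hat isBoundedLinearMap_hat v = hat v :=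
    rfl
  simp only [hatAnticomm, _root_.add_apply, _root_.smul_apply, ContinuousLinearMap.smulRight_apply,
    ContinuousLinearMap.comp_apply, ContinuousLinearMap.prod_apply,
    IsBoundedBilinearMap.deriv_apply, hhat_apply, innerSL_apply_apply, Pi.sub_apply, id_eq,
    Function.comp_apply, smul_eq_mul]
  match_scalars <;> field_simp
  ring

section Frobenius

variable (A B C : M3)

lemma frob_comm : frob A B = frob B A := by
  rw [frob, frob, ← trace_transpose, transpose_mul, transpose_transpose]

lemma frob_add_left : frob (A + B) C = frob A C + frob B C := by
  simp [frob, Matrix.add_mul]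

lemma frob_add_right : frob A (B + C) = frob A B + frob A C := by
  simp [frob, Matrix.mul_add]

lemma frob_smul_left (c : ℝ) : frob (c • A) B = c * frob A B := by
  simp [frob]

lemma frob_smul_right (c : ℝ) : frob A (c • B) = c * frob A B := by
  simp [frob]

variable {A B}

lemma frob_eq_zero_of_skew_of_symm (hA : Aᵀ = -A) (hB : Bᵀ = B) : frob A B = 0 := by
  have h₁ : frob A B = -(A * B).trace := by simp [frob, hA]
  have h₂ : frob A B = (A * B).trace := by
    rw [frob, ← trace_transpose, transpose_mul, transpose_transpose, hB, trace_mul_comm]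
  linarith

lemma frob_eq_zero_of_symm_of_skew (hA : Aᵀ = A) (hB : Bᵀ = -B) : frob A B = 0 := by
  rw [frob_comm, frob_eq_zero_of_skew_of_symm hB hA]

end Frobenius

lemma hat_transpose (x : E3) : (hat x)ᵀ = -hat x := by
  ext i j
  fin_cases i <;> fin_cases j <;> simp [hat]

lemma transpose_hatAnticomm (x v : E3) : (hatAnticomm x v)ᵀ = hatAnticomm x v := by
  simp [hatAnticomm, transpose_mul, hat_transpose, add_comm]

lemma transpose_hat_mul_self (x : E3) : (hat x * hat x)ᵀ = hat x * hat x := by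
  simp [transpose_mul, hat_transpose]

lemma frob_hat_hat (v w : E3) : frob (hat v) (hat w) = 2 * ⟪v, w⟫ := by
  rw [E3.inner_eq]
  simp [frob, hat, trace, Matrix.mul_apply, Fin.sum_univ_three]
  ring

lemma frob_hat_mul_self (x : E3) :
    frob (hat x * hat x) (hat x * hat x) = 2 * ‖x‖ ^ 4 := by
  rw [show ‖x‖ ^ 4 = (‖x‖ ^ 2) ^ 2 by ring, E3.norm_sq_eq]
  simp [frob, hat, trace, Matrix.mul_apply, Fin.sum_univ_three]
  ring

lemma frob_hat_mul_self_hatAnticomm (x w : E3) :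
    frob (hat x * hat x) (hatAnticomm x w) = 4 * ‖x‖ ^ 2 * ⟪x, w⟫ := by
  rw [E3.norm_sq_eq, E3.inner_eq]
  simp [frob, hatAnticomm, hat, trace, Matrix.mul_apply, Fin.sum_univ_three]
  ring

lemma frob_hatAnticomm (x v w : E3) :
    frob (hatAnticomm x v) (hatAnticomm x w) =
      2 * ‖x‖ ^ 2 * ⟪v, w⟫ + 6 * ⟪x, v⟫ * ⟪x, w⟫ := by
  rw [E3.norm_sq_eq, E3.inner_eq, E3.inner_eq, E3.inner_eq]
  simp [frob, hatAnticomm, hat, trace, Matrix.mul_apply, Fin.sum_univ_three]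
  ring

lemma frob_hat_combination (x v w : E3) (a b c d a' c' : ℝ) :
    frob (a • hat x + b • hat v + c • (hat x * hat x) + d • hatAnticomm x v)
        (a' • hat x + b • hat w + c' • (hat x * hat x) + d • hatAnticomm x w) =
      2 * ‖x‖ ^ 2 * a * a' + 2 * b * (a * ⟪x, w⟫ + a' * ⟪x, v⟫) + 2 * b ^ 2 * ⟪v, w⟫
        + 2 * ‖x‖ ^ 4 * c * c' + 4 * ‖x‖ ^ 2 * d * (c * ⟪x, w⟫ + c' * ⟪x, v⟫)
        + d ^ 2 * (2 * ‖x‖ ^ 2 * ⟪v, w⟫ + 6 * ⟪x, v⟫ * ⟪x, w⟫) := by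
  simp only [frob_add_left, frob_add_right, frob_smul_left, frob_smul_right,
    frob_eq_zero_of_skew_of_symm (hat_transpose _) (transpose_hat_mul_self _),
    frob_eq_zero_of_skew_of_symm (hat_transpose _) (transpose_hatAnticomm _ _),
    frob_eq_zero_of_symm_of_skew (transpose_hat_mul_self _) (hat_transpose _),
    frob_eq_zero_of_symm_of_skew (transpose_hatAnticomm _ _) (hat_transpose _),
    frob_comm (hatAnticomm x v) (hat x * hat x), frob_hat_hat, frob_hat_mul_self,
    frob_hat_mul_self_hatAnticomm, frob_hatAnticomm, real_inner_self_eq_norm_sq,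
    real_inner_comm v x]
  ring

/-- the metric tensor of SO(3) in exponential coordinates:
`g_{αβ}(x) = (1/2)⟨D_α(x), D_β(x)⟩_F` has the stated closed form. -/
theorem stmt7 (x : E3) (hx : 0 < ‖x‖) (α β : Fin 3) :
    (1 / 2) * frob (fderiv ℝ (fun y : E3 => NormedSpace.exp (hat y)) x (e α))
                   (fderiv ℝ (fun y : E3 => NormedSpace.exp (hat y)) x (e β)) =
      ((2 * Real.cos ‖x‖ - 2 + ‖x‖ ^ 2) / ‖x‖ ^ 4) * (x α * x β)
        + (2 * (1 - Real.cos ‖x‖) / ‖x‖ ^ 2) * (if α = β then 1 else 0) := by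
  have hx0 : x ≠ 0 := norm_pos_iff.mp hx
  have inner_e : ∀ γ, ⟪x, e γ⟫ = x γ := fun γ => by simp [e, EuclideanSpace.inner_single_right]
  have inner_e_e : ⟪e α, e β⟫ = if α = β then 1 else 0 := by
    simp [e, EuclideanSpace.inner_single_left]
  rw [fderiv_exp_hat_apply hx0, fderiv_exp_hat_apply hx0, frob_hat_combination,
    inner_e, inner_e, inner_e_e]
  field_simp
  linear_combination (2 * (‖x‖ ^ 2 - 1) * x α * x β + 2 * ‖x‖ ^ 2 * (if α = β then 1 else 0))
    * sin_sq_add_cos_sq ‖x‖
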